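/- arXiv:0907.0208 — 5 statements merged into one kernel-verified Lean document; each statement's English description precedes it below -/
import Mathlib

section
/- Let d ≥ 1 and let Θ ⊆ ℝ^d be an open set that is closed under multiplication by positive real scalars. Let v₀ : ℝ^d → ℝ be a linear functional. If there exists w ∈ Θ ∩ ℤ^d with v₀(w) = 0, and there exists u ∈ ℤ^d with v₀(u) = 1, then there exists t ∈ Θ ∩ ℤ^d with v₀(t) = 1. -/
open Filter Topology

section OpenCone

variable {E : Type*} [TopologicalSpace E] [AddCommGroup E] [Module ℝ E]
  [ContinuousAdd E] [ContinuousSMul ℝ E]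

/-- `w + u / (n + 1)` tends to `w`, so it lies in the open set `Θ` for large `n`; rescaling by
`n + 1` keeps it in the cone. -/
theorem exists_nat_succ_smul_add_mem {Θ : Set E} (hopen : IsOpen Θ)
    (hcone : ∀ x ∈ Θ, ∀ lam : ℝ, 0 < lam → lam • x ∈ Θ) {w : E} (hw : w ∈ Θ) (u : E) :
    ∃ n : ℕ, ((n : ℝ) + 1) • w + u ∈ Θ := by
  have htend : Tendsto (fun n : ℕ => w + ((n : ℝ) + 1)⁻¹ • u) atTop (𝓝 w) := by
    simpa using ((tendsto_one_div_add_atTop_nhds_zero_nat (𝕜 := ℝ)).smul_const u).const_add w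
  obtain ⟨n, hn⟩ := (htend.eventually (hopen.mem_nhds hw)).exists
  have hpos : (0 : ℝ) < (n : ℝ) + 1 := n.cast_add_one_pos
  refine ⟨n, ?_⟩
  simpa [smul_add, smul_smul, hpos.ne'] using hcone _ hn _ hpos

end OpenCone

theorem cone_lattice_level_one_general (d : ℕ)
    (Θ : Set (Fin d → ℝ)) (hopen : IsOpen Θ)
    (hcone : ∀ x ∈ Θ, ∀ lam : ℝ, 0 < lam → lam • x ∈ Θ)
    (v₀ : (Fin d → ℝ) →ₗ[ℝ] ℝ)
    (hw : ∃ w : Fin d → ℤ, (fun i => (w i : ℝ)) ∈ Θ ∧ v₀ (fun i => (w i : ℝ)) = 0)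
    (hu : ∃ u : Fin d → ℤ, v₀ (fun i => (u i : ℝ)) = 1) :
    ∃ t : Fin d → ℤ, (fun i => (t i : ℝ)) ∈ Θ ∧ v₀ (fun i => (t i : ℝ)) = 1 := by
  obtain ⟨w, hwΘ, hw0⟩ := hw
  obtain ⟨u, hu1⟩ := hu
  obtain ⟨n, hn⟩ := exists_nat_succ_smul_add_mem hopen hcone hwΘ (fun i => (u i : ℝ))
  have hcast : (fun i => (((n + 1 : ℤ) • w + u) i : ℝ))
      = ((n : ℝ) + 1) • (fun i => (w i : ℝ)) + fun i => (u i : ℝ) := by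
    funext i
    simp
  refine ⟨(n + 1 : ℤ) • w + u, hcast ▸ hn, ?_⟩
  rw [hcast, map_add, map_smul, hw0, hu1, smul_zero, zero_add]

theorem cone_lattice_level_one (d : ℕ) (hd : 1 ≤ d)
    (Θ : Set (Fin d → ℝ)) (hopen : IsOpen Θ)
    (hcone : ∀ x ∈ Θ, ∀ lam : ℝ, 0 < lam → lam • x ∈ Θ)
    (v₀ : (Fin d → ℝ) →ₗ[ℝ] ℝ)
    (hw : ∃ w : Fin d → ℤ, (fun i => (w i : ℝ)) ∈ Θ ∧ v₀ (fun i => (w i : ℝ)) = 0)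
    (hu : ∃ u : Fin d → ℤ, v₀ (fun i => (u i : ℝ)) = 1) :
    ∃ t : Fin d → ℤ, (fun i => (t i : ℝ)) ∈ Θ ∧ v₀ (fun i => (t i : ℝ)) = 1 :=
  cone_lattice_level_one_general d Θ hopen hcone v₀ hw hu
end

section
/- Let x, y, z ∈ ℤ³ with det[x y z] = 1 (columns x, y, z). For integers s₁, s₂, s₃, put t = s₁·x + s₂·y + s₃·z. Then there exists u ∈ ℤ³ with det[x t u] = 1 if and only if gcd(s₂, s₃) = 1. -/
/-- Determinant of the 3×3 integer matrix with columns `a`, `b`, `c`. -/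
def det3 (a b c : Fin 3 → ℤ) : ℤ := Matrix.det (Matrix.transpose (Matrix.of ![a, b, c]))

/-!
Expanding `det[x t u]` in the middle column kills the `x`-component of `t`, so
`det[x t u] = s₂ det[x y u] + s₃ det[x z u]`; a solution `u` thus exhibits a Bézout relation
between `s₂` and `s₃`. Conversely, if `a s₂ + b s₃ = 1`, then `u = a z - b y` gives
`det[x t u] = (a s₂ + b s₃) det[x y z] = 1`.
-/

theorem det3_apply (a b c : Fin 3 → ℤ) :
    det3 a b c = a 0 * b 1 * c 2 - a 0 * b 2 * c 1 - a 1 * b 0 * c 2 + a 1 * b 2 * c 0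
      + a 2 * b 0 * c 1 - a 2 * b 1 * c 0 := by
  simp [det3, Matrix.det_fin_three]

theorem det3_linearCombination_middle (a b c u : Fin 3 → ℤ) (r p q : ℤ) :
    det3 a (fun i => r * a i + p * b i + q * c i) u = p * det3 a b u + q * det3 a c u := by
  simp only [det3_apply]
  ring

theorem det3_linearCombination_middle_right (a b c : Fin 3 → ℤ) (r p q m n : ℤ) :
    det3 a (fun i => r * a i + p * b i + q * c i) (fun i => m * c i - n * b i) =
      (m * p + n * q) * det3 a b c := by
  simp only [det3_apply]
  ring

theorem delzant_condition_iff_gcd (x y z : Fin 3 → ℤ) (h : det3 x y z = 1)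
    (s₁ s₂ s₃ : ℤ) (t : Fin 3 → ℤ)
    (ht : t = fun i => s₁ * x i + s₂ * y i + s₃ * z i) :
    (∃ u : Fin 3 → ℤ, det3 x t u = 1) ↔ Int.gcd s₂ s₃ = 1 := by
  rw [← Int.isCoprime_iff_gcd_eq_one]
  subst ht
  constructor
  · rintro ⟨u, hu⟩
    rw [det3_linearCombination_middle] at hu
    exact ⟨det3 x y u, det3 x z u, by linarith⟩
  · rintro ⟨a, b, hab⟩
    exact ⟨fun i => a * z i - b * y i, by rw [det3_linearCombination_middle_right, hab, h, one_mul]⟩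
end

section
/- Let n⁰, n¹, …, n^k ∈ ℝ³. Write (v × w)(3) for the third component of the cross product v × w. Suppose (n⁰ × nⁱ)(3) > 0 for every 1 ≤ i ≤ k, and (nⁱ × n^{i+1})(3) > 0 for every 0 ≤ i ≤ k−1. Then (nⁱ × n^j)(3) > 0 for all 0 ≤ i < j ≤ k. -/
/-- Third component of the cross product of two vectors in `ℝ³`. -/
def cross3 (v w : Fin 3 → ℝ) : ℝ := v 0 * w 1 - v 1 * w 0

/-- The Grassmann–Plücker relation for the `2 × 2` minors. -/
theorem cross3_mul_cross3 (a b c d : Fin 3 → ℝ) :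
    cross3 a c * cross3 b d = cross3 a b * cross3 c d + cross3 a d * cross3 b c := by
  simp only [cross3]
  ring

theorem cross3_pos_trans_of_pivot {a b c d : Fin 3 → ℝ} (hab : 0 < cross3 a b)
    (hac : 0 < cross3 a c) (had : 0 < cross3 a d) (hbc : 0 < cross3 b c)
    (hcd : 0 < cross3 c d) : 0 < cross3 b d := by
  have h : 0 < cross3 a c * cross3 b d := by
    rw [cross3_mul_cross3]
    positivity
  exact pos_of_mul_pos_right h hac.le

theorem cyclic_ordering_of_projected_normals (k : ℕ) (n : ℕ → Fin 3 → ℝ)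
    (h0 : ∀ i, 1 ≤ i → i ≤ k → 0 < cross3 (n 0) (n i))
    (hsucc : ∀ i, i + 1 ≤ k → 0 < cross3 (n i) (n (i + 1))) :
    ∀ i j, i < j → j ≤ k → 0 < cross3 (n i) (n j) := by
  intro i j hij hjk
  induction j generalizing i with
  | zero => omega
  | succ j ih =>
    rcases Nat.eq_zero_or_pos i with rfl | hi
    · exact h0 (j + 1) (by omega) hjk
    rcases Nat.lt_succ_iff_lt_or_eq.mp hij with hij | rfl
    · exact cross3_pos_trans_of_pivot (h0 i hi (by omega)) (h0 j (by omega) (by omega))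
        (h0 (j + 1) (by omega) hjk) (ih i hij (by omega)) (hsucc j hjk)
    · exact hsucc i hjk
end

section
/- Let n⁰, n¹, …, n^{k+1} ∈ ℝ³ satisfy: (i) (n⁰ × nⁱ)(3) > 0 for 1 ≤ i ≤ k+1; (ii) (nⁱ × n^{i+1})(3) > 0 for 0 ≤ i ≤ k; (iii) det[nⁱ n^{i+1} n^{i+2}] > 0 for 0 ≤ i ≤ k−1. Then det[n^h nⁱ n^j] > 0 for all 0 ≤ h < i < j ≤ k+1. -/
/-- Determinant of the 3×3 real matrix with columns `a`, `b`, `c`. -/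
def det3R (a b c : Fin 3 → ℝ) : ℝ := Matrix.det (Matrix.transpose (Matrix.of ![a, b, c]))

theorem det3R_eq (a b c : Fin 3 → ℝ) :
    det3R a b c = a 0 * (b 1 * c 2 - b 2 * c 1) - b 0 * (a 1 * c 2 - a 2 * c 1)
      + c 0 * (a 1 * b 2 - a 2 * b 1) := by
  rw [det3R, Matrix.det_transpose, Matrix.det_fin_three]
  simp only [Matrix.of_apply, Matrix.cons_val_zero, Matrix.cons_val_one, Matrix.cons_val]
  ring

theorem det3R_mul_cross3_of_last (a b c d : Fin 3 → ℝ) :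
    det3R a b d * cross3 b c = det3R a b c * cross3 b d + det3R b c d * cross3 a b := by
  simp only [det3R_eq, cross3]
  ring

theorem det3R_mul_cross3_of_middle (a b c d : Fin 3 → ℝ) :
    det3R a c d * cross3 b c = det3R b c d * cross3 a c + det3R a b c * cross3 c d := by
  simp only [det3R_eq, cross3]
  ring

theorem cross3_pos_of_plucker {a b c d : Fin 3 → ℝ} (hac : 0 < cross3 a c)
    (hab : 0 < cross3 a b) (hcd : 0 < cross3 c d) (had : 0 < cross3 a d)
    (hbc : 0 < cross3 b c) : 0 < cross3 b d := by
  have hprod : 0 < cross3 a c * cross3 b d := by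
    rw [cross3_mul_cross3]
    exact add_pos (mul_pos hab hcd) (mul_pos had hbc)
  exact pos_of_mul_pos_right hprod hac.le

theorem det3R_pos_of_last {a b c d : Fin 3 → ℝ} (hbc : 0 < cross3 b c)
    (habc : 0 < det3R a b c) (hbd : 0 < cross3 b d) (hbcd : 0 < det3R b c d)
    (hab : 0 < cross3 a b) : 0 < det3R a b d := by
  have hprod : 0 < det3R a b d * cross3 b c := by
    rw [det3R_mul_cross3_of_last]
    exact add_pos (mul_pos habc hbd) (mul_pos hbcd hab)
  exact pos_of_mul_pos_left hprod hbc.le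

theorem det3R_pos_of_middle {a b c d : Fin 3 → ℝ} (hbc : 0 < cross3 b c)
    (hbcd : 0 < det3R b c d) (hac : 0 < cross3 a c) (habc : 0 < det3R a b c)
    (hcd : 0 < cross3 c d) : 0 < det3R a c d := by
  have hprod : 0 < det3R a c d * cross3 b c := by
    rw [det3R_mul_cross3_of_middle]
    exact add_pos (mul_pos hbcd hac) (mul_pos habc hcd)
  exact pos_of_mul_pos_left hprod hbc.le

section Sequence

variable {N : ℕ} {n : ℕ → Fin 3 → ℝ}

variable (h0 : ∀ i, 1 ≤ i → i ≤ N → 0 < cross3 (n 0) (n i))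
    (hsucc : ∀ i, i + 1 ≤ N → 0 < cross3 (n i) (n (i + 1)))
include h0 hsucc

theorem cross3_pos_of_lt {i j : ℕ} (hij : i < j) (hj : j ≤ N) : 0 < cross3 (n i) (n j) := by
  rcases Nat.eq_zero_or_pos i with rfl | hi
  · exact h0 j hij hj
  induction j, hij using Nat.le_induction with
  | base => exact hsucc i hj
  | succ j hij ih =>
    exact cross3_pos_of_plucker (h0 j (by omega) (by omega)) (h0 i hi (by omega))
      (hsucc j hj) (h0 (j + 1) (by omega) hj) (ih (by omega))

variable (hdet : ∀ i, i + 2 ≤ N → 0 < det3R (n i) (n (i + 1)) (n (i + 2)))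
include hdet

theorem det3R_succ_pos_of_lt {h i : ℕ} (hhi : h < i) (hi : i + 1 ≤ N) :
    0 < det3R (n h) (n i) (n (i + 1)) := by
  induction i, hhi using Nat.le_induction with
  | base => exact hdet h hi
  | succ i hhi ih =>
    exact det3R_pos_of_middle (hsucc i (by omega)) (hdet i hi)
      (cross3_pos_of_lt h0 hsucc (by omega) (by omega)) (ih (by omega)) (hsucc (i + 1) hi)

theorem det3R_pos_of_lt {h i j : ℕ} (hhi : h < i) (hij : i < j) (hj : j ≤ N) :
    0 < det3R (n h) (n i) (n j) := by
  induction j, hij using Nat.le_induction with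
  | base => exact det3R_succ_pos_of_lt h0 hsucc hdet hhi hj
  | succ j hij ih =>
    exact det3R_pos_of_last (cross3_pos_of_lt h0 hsucc hij (by omega)) (ih (by omega))
      (cross3_pos_of_lt h0 hsucc (by omega) hj) (det3R_succ_pos_of_lt h0 hsucc hdet hij hj)
      (cross3_pos_of_lt h0 hsucc hhi (by omega))

end Sequence

theorem triple_determinant_positivity (k : ℕ) (n : ℕ → Fin 3 → ℝ)
    (h0 : ∀ i, 1 ≤ i → i ≤ k + 1 → 0 < cross3 (n 0) (n i))
    (hsucc : ∀ i, i + 1 ≤ k + 1 → 0 < cross3 (n i) (n (i + 1)))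
    (hdet : ∀ i, i + 2 ≤ k + 1 → 0 < det3R (n i) (n (i + 1)) (n (i + 2))) :
    ∀ h i j, h < i → i < j → j ≤ k + 1 → 0 < det3R (n h) (n i) (n j) :=
  fun _ _ _ hhi hij hj => det3R_pos_of_lt h0 hsucc hdet hhi hij hj
end

section
/- Let H = {v ∈ ℝ² : det[w v] > 0} be an open half-plane determined by a nonzero vector w ∈ ℝ², and let v¹, v², v³ ∈ H with v¹ and v³ linearly independent. Let g₁, g₂ : ℝ² → ℝ be linear functionals with g₁(v¹) < 0, g₁(v²) = 0, g₁(v³) > 0, and g₂(v¹) > 0, g₂(v³) > 0. Then g₂(v²) > 0. -/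
/-! Write `v₂ = a • v₁ + b • v₃`. Applying `g₁` forces `a` and `b` to have the same sign, and
applying `det[w ·]` forces that sign to be positive; hence `g₂ v₂ = a g₂(v₁) + b g₂(v₃) > 0`. -/

/-- The 2×2 determinant `det[w v] = w₁v₂ − w₂v₁`. -/
def det2 (w v : Fin 2 → ℝ) : ℝ := w 0 * v 1 - w 1 * v 0

theorem det2_smul_add_smul (w x y : Fin 2 → ℝ) (a b : ℝ) :
    det2 w (a • x + b • y) = a * det2 w x + b * det2 w y := by
  simp only [det2, Pi.add_apply, Pi.smul_apply, smul_eq_mul]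
  ring

theorem exists_smul_add_smul_eq_of_finrank_eq_two {K V : Type*} [Field K] [AddCommGroup V]
    [Module K V] (hV : Module.finrank K V = 2) {x y : V} (hxy : LinearIndependent K ![x, y])
    (z : V) : ∃ a b : K, a • x + b • y = z := by
  have hspan := hxy.span_eq_top_of_card_eq_finrank (by simp [hV])
  rw [Matrix.range_cons_cons_empty] at hspan
  exact Submodule.mem_span_pair.mp (hspan ▸ Submodule.mem_top)

theorem pos_and_pos_of_mul_add_mul {R : Type*} [CommRing R] [LinearOrder R] [IsStrictOrderedRing R]
    {a b x₁ x₃ y₁ y₃ : R} (hx₁ : x₁ < 0) (hx₃ : 0 < x₃) (hx : a * x₁ + b * x₃ = 0)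
    (hy₁ : 0 ≤ y₁) (hy₃ : 0 ≤ y₃) (hy : 0 < a * y₁ + b * y₃) : 0 < a ∧ 0 < b := by
  have ha : 0 < a := by
    by_contra! ha
    have hb : b ≤ 0 := by nlinarith
    nlinarith
  exact ⟨ha, by nlinarith⟩

theorem halfplane_separation_general (w v₁ v₂ v₃ : Fin 2 → ℝ)
    (hv₁ : 0 < det2 w v₁) (hv₂ : 0 < det2 w v₂) (hv₃ : 0 < det2 w v₃)
    (hindep : LinearIndependent ℝ ![v₁, v₃])
    (g₁ g₂ : (Fin 2 → ℝ) →ₗ[ℝ] ℝ)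
    (hg₁₁ : g₁ v₁ < 0) (hg₁₂ : g₁ v₂ = 0) (hg₁₃ : 0 < g₁ v₃)
    (hg₂₁ : 0 < g₂ v₁) (hg₂₃ : 0 < g₂ v₃) :
    0 < g₂ v₂ := by
  obtain ⟨a, b, rfl⟩ :=
    exists_smul_add_smul_eq_of_finrank_eq_two (Module.finrank_fin_fun ℝ) hindep v₂
  rw [det2_smul_add_smul] at hv₂
  simp only [map_add, map_smul, smul_eq_mul] at hg₁₂ ⊢
  obtain ⟨ha, hb⟩ := pos_and_pos_of_mul_add_mul hg₁₁ hg₁₃ hg₁₂ hv₁.le hv₃.le hv₂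
  positivity

theorem halfplane_separation (w v₁ v₂ v₃ : Fin 2 → ℝ) (hw : w ≠ 0)
    (hv₁ : 0 < det2 w v₁) (hv₂ : 0 < det2 w v₂) (hv₃ : 0 < det2 w v₃)
    (hindep : LinearIndependent ℝ ![v₁, v₃])
    (g₁ g₂ : (Fin 2 → ℝ) →ₗ[ℝ] ℝ)
    (hg₁₁ : g₁ v₁ < 0) (hg₁₂ : g₁ v₂ = 0) (hg₁₃ : 0 < g₁ v₃)
    (hg₂₁ : 0 < g₂ v₁) (hg₂₃ : 0 < g₂ v₃) :
    0 < g₂ v₂ :=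
  halfplane_separation_general w v₁ v₂ v₃ hv₁ hv₂ hv₃ hindep g₁ g₂ hg₁₁ hg₁₂ hg₁₃ hg₂₁ hg₂₃
end
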